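/- Let L ≥ 1 be an integer, let A > 0, σ_v > 0, α > 0, β > 0 with α ≠ β, let ψ_0, …, ψ_{L−1} ∈ ℝ, and let P_0, …, P_{L−1} > 0 be fixed. Set a = Aσ_v², λ_l(φ) = A(α² + β² + 2αβ cos(ψ_l + φ)), and z_l(φ) = 2√(P_l λ_l(φ))/a. Then the log-likelihood ℒ(φ) = ∑_{l=0}^{L−1} [ −(P_l + λ_l(φ))/a + log I₀(z_l(φ)) ] − L log a is twice differentiable with ℒ''(φ) = (2αβ/σ_v²) ∑_{l=0}^{L−1} cos(ψ_l + φ)[ 1 − R(z_l(φ)) √(P_l/λ_l(φ)) ] + (4α²β²/σ_v⁴) ∑_{l=0}^{L−1} sin²(ψ_l + φ) · ( 1 − R(z_l(φ))² − (2/z_l(φ)) R(z_l(φ)) ) · (P_l / λ_l(φ)). -/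

import Mathlib

open Real Finset

/-- Modified Bessel function of the first kind of order zero (integral representation). -/
noncomputable def besselI0 (z : ℝ) : ℝ :=
  (1 / Real.pi) * ∫ t in (0:ℝ)..Real.pi, Real.exp (z * Real.cos t)

/-- Modified Bessel function of the first kind of order one (integral representation). -/
noncomputable def besselI1 (z : ℝ) : ℝ :=
  (1 / Real.pi) * ∫ t in (0:ℝ)..Real.pi, Real.exp (z * Real.cos t) * Real.cos t

/-- The Bessel ratio `R(z) = I₁(z)/I₀(z)`. -/
noncomputable def besselR (z : ℝ) : ℝ := besselI1 z / besselI0 z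

open MeasureTheory intervalIntegral

lemma besselI0_pos (x : ℝ) : 0 < besselI0 x := by
  have h : 0 < ∫ t in (0:ℝ)..Real.pi, Real.exp (x * Real.cos t) := by
    apply intervalIntegral.intervalIntegral_pos_of_pos_on
    · exact (Continuous.intervalIntegrable (by continuity) _ _)
    · intro t _; exact Real.exp_pos _
    · exact Real.pi_pos
  exact mul_pos (by positivity) h

lemma hasDerivAt_bessel_aux (g : ℝ → ℝ) (hg : Continuous g) (hg1 : ∀ t, |g t| ≤ 1) (x : ℝ) :
    HasDerivAt (fun y => ∫ t in (0:ℝ)..Real.pi, Real.exp (y * Real.cos t) * g t)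
      (∫ t in (0:ℝ)..Real.pi, Real.exp (x * Real.cos t) * Real.cos t * g t) x := by
  have := intervalIntegral.hasDerivAt_integral_of_dominated_loc_of_deriv_le
    (F := fun y t => Real.exp (y * Real.cos t) * g t)
    (F' := fun y t => Real.exp (y * Real.cos t) * Real.cos t * g t)
    (bound := fun _ => Real.exp (|x| + 1)) (a := 0) (b := Real.pi) (x₀ := x)
    (s := Metric.ball x 1) (μ := MeasureTheory.volume) (Metric.ball_mem_nhds x one_pos)
    (Filter.Eventually.of_forall fun y => (Continuous.aestronglyMeasurable (by continuity)))
    ((Continuous.intervalIntegrable (by continuity) _ _))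
    ((Continuous.aestronglyMeasurable (by continuity)))
    (Filter.Eventually.of_forall fun t _ y hy => ?_)
    ((Continuous.intervalIntegrable (by continuity) _ _))
    (Filter.Eventually.of_forall fun t _ y _ => ?_)
  · exact this.2
  · have hy' : |y - x| < 1 := by simpa [Metric.mem_ball, Real.dist_eq] using hy
    have h2 : y * Real.cos t ≤ |x| + 1 := by
      have h3 : |y * Real.cos t| ≤ |y| := by
        rw [abs_mul]; nlinarith [abs_cos_le_one t, abs_nonneg y]
      have h4 : |y| ≤ |x| + 1 := by
        have := abs_sub_abs_le_abs_sub y x; linarith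
      linarith [le_trans (le_abs_self (y * Real.cos t)) h3]
    have h1 : |Real.exp (y * Real.cos t) * Real.cos t * g t| ≤ Real.exp (y * Real.cos t) := by
      rw [abs_mul, abs_mul, Real.abs_exp]
      have e1 : Real.exp (y * Real.cos t) * |Real.cos t| * |g t|
          ≤ Real.exp (y * Real.cos t) * |Real.cos t| :=
        mul_le_of_le_one_right (by positivity) (hg1 t)
      have e2 : Real.exp (y * Real.cos t) * |Real.cos t| ≤ Real.exp (y * Real.cos t) :=
        mul_le_of_le_one_right (Real.exp_pos _).le (abs_cos_le_one t)
      linarith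
    calc ‖Real.exp (y * Real.cos t) * Real.cos t * g t‖ ≤ Real.exp (y * Real.cos t) := h1
      _ ≤ Real.exp (|x| + 1) := Real.exp_le_exp.2 h2
  · exact ((hasDerivAt_mul_const (Real.cos t)).exp (x := y)).mul_const (g t)

lemma hasDerivAt_besselI0 (x : ℝ) : HasDerivAt besselI0 (besselI1 x) x := by
  have key := (hasDerivAt_bessel_aux (fun _ => 1) continuous_const (fun t => by norm_num) x).const_mul (1 / Real.pi)
  simp only [mul_one] at key
  exact key

lemma hasDerivAt_besselI1 (x : ℝ) :
    HasDerivAt besselI1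
      ((1 / Real.pi) * ∫ t in (0:ℝ)..Real.pi, Real.exp (x * Real.cos t) * Real.cos t * Real.cos t) x :=
  (hasDerivAt_bessel_aux Real.cos Real.continuous_cos (fun t => abs_cos_le_one t) x).const_mul (1 / Real.pi)

/-- Integration by parts identity. -/
lemma bessel_ibp (x : ℝ) :
    ∫ t in (0:ℝ)..Real.pi, Real.exp (x * Real.cos t) * Real.cos t
      = x * ∫ t in (0:ℝ)..Real.pi, Real.exp (x * Real.cos t) * Real.sin t ^ 2 := by
  have hd : ∀ t ∈ Set.uIcc (0:ℝ) Real.pi,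
      HasDerivAt (fun t => Real.exp (x * Real.cos t) * Real.sin t)
        (Real.exp (x * Real.cos t) * Real.cos t - x * (Real.exp (x * Real.cos t) * Real.sin t ^ 2)) t := by
    intro t _
    have h1 : HasDerivAt (fun t => x * Real.cos t) (x * (-Real.sin t)) t :=
      (Real.hasDerivAt_cos t).const_mul x
    have h2 := (h1.exp).fun_mul (Real.hasDerivAt_sin t)
    refine h2.congr_deriv ?_
    ring
  have h3 := intervalIntegral.integral_eq_sub_of_hasDerivAt hd
    (Continuous.intervalIntegrable (by continuity) _ _)
  simp [Real.sin_pi] at h3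
  have h4 : IntervalIntegrable (fun t => Real.exp (x * Real.cos t) * Real.cos t) MeasureTheory.volume 0 Real.pi :=
    Continuous.intervalIntegrable (by continuity) _ _
  have h5 : IntervalIntegrable (fun t => x * (Real.exp (x * Real.cos t) * Real.sin t ^ 2)) MeasureTheory.volume 0 Real.pi :=
    Continuous.intervalIntegrable (by continuity) _ _
  rw [intervalIntegral.integral_sub h4 h5] at h3
  rw [intervalIntegral.integral_const_mul] at h3
  linarith

lemma hasDerivAt_besselR {x : ℝ} (hx : x ≠ 0) :
    HasDerivAt besselR (1 - besselR x ^ 2 - besselR x / x) x := by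
  have hI0 := hasDerivAt_besselI0 x
  have hI1' : HasDerivAt besselI1 (besselI0 x - besselI1 x / x) x := by
    have h := hasDerivAt_besselI1 x
    have key : (1 / Real.pi) * (∫ t in (0:ℝ)..Real.pi, Real.exp (x * Real.cos t) * Real.cos t * Real.cos t)
        = besselI0 x - besselI1 x / x := by
      have hsq : ∀ t : ℝ, Real.exp (x * Real.cos t) * Real.cos t * Real.cos t
          = Real.exp (x * Real.cos t) - Real.exp (x * Real.cos t) * Real.sin t ^ 2 := by
        intro t
        have := Real.sin_sq_add_cos_sq t
        nlinarith [Real.exp_pos (x * Real.cos t)]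
      rw [intervalIntegral.integral_congr (fun t _ => hsq t)]
      rw [intervalIntegral.integral_sub (Continuous.intervalIntegrable (by continuity) _ _)
        (Continuous.intervalIntegrable (by continuity) _ _)]
      have hibp := bessel_ibp x
      have : (∫ t in (0:ℝ)..Real.pi, Real.exp (x * Real.cos t) * Real.sin t ^ 2)
          = (∫ t in (0:ℝ)..Real.pi, Real.exp (x * Real.cos t) * Real.cos t) / x := by
        field_simp at hibp ⊢
        linarith
      rw [this, besselI0, besselI1]
      field_simp
    rwa [key] at h
  have hI0ne : besselI0 x ≠ 0 := ne_of_gt (besselI0_pos x)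
  have h := hI1'.div hI0 hI0ne
  refine h.congr_deriv ?_
  rw [besselR]
  field_simp
  ring

lemma hasDerivAt_log_besselI0 (x : ℝ) :
    HasDerivAt (fun y => Real.log (besselI0 y)) (besselR x) x := by
  simpa [besselR] using (hasDerivAt_besselI0 x).log (besselI0_pos x).ne'

/-- The log-likelihood of the phase `φ` given `L` independent noncentral chi-squared power
observations `P_l` is twice differentiable, with second derivative
`ℒ''(φ) = (2αβ/σ_v²) ∑_l cos(ψ_l + φ)[1 − R(z_l)√(P_l/λ_l)]
        + (4α²β²/σ_v⁴) ∑_l sin²(ψ_l + φ)(1 − R(z_l)² − (2/z_l)R(z_l))(P_l/λ_l)`. -/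
theorem loglikelihood_second_deriv (L : ℕ) (hL : 1 ≤ L) (A σv α β : ℝ)
    (hA : 0 < A) (hσv : 0 < σv) (hα : 0 < α) (hβ : 0 < β) (hαβ : α ≠ β)
    (ψ : Fin L → ℝ) (P : Fin L → ℝ) (hP : ∀ l, 0 < P l)
    (a : ℝ) (ha : a = A * σv^2)
    (lam : ℝ → Fin L → ℝ)
    (hlam : ∀ φ l, lam φ l = A * (α^2 + β^2 + 2 * α * β * Real.cos (ψ l + φ)))
    (z : ℝ → Fin L → ℝ)
    (hz : ∀ φ l, z φ l = 2 * Real.sqrt (P l * lam φ l) / a)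
    (ℒ : ℝ → ℝ)
    (hℒ : ∀ φ, ℒ φ = (∑ l : Fin L, (-(P l + lam φ l) / a
        + Real.log (besselI0 (z φ l)))) - L * Real.log a) :
    (∀ φ : ℝ, DifferentiableAt ℝ ℒ φ) ∧
    ∀ φ : ℝ, HasDerivAt (deriv ℒ)
      ((2 * α * β / σv^2) * (∑ l : Fin L, Real.cos (ψ l + φ) *
          (1 - besselR (z φ l) * Real.sqrt (P l / lam φ l)))
        + (4 * α^2 * β^2 / σv^4) * (∑ l : Fin L, Real.sin (ψ l + φ)^2 *
          (1 - (besselR (z φ l))^2 - (2 / z φ l) * besselR (z φ l)) * (P l / lam φ l))) φ := by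
  have ha0 : 0 < a := by rw [ha]; positivity
  have hlp : ∀ φ l, 0 < lam φ l := by
    intro φ l
    rw [hlam]
    have h1 : α - β ≠ 0 := sub_ne_zero.mpr hαβ
    have h2 : 0 < (α - β) ^ 2 := by positivity
    nlinarith [mul_pos hA h2, mul_nonneg (mul_nonneg hA.le (by positivity : (0:ℝ) ≤ 2 * α * β))
      (by linarith [Real.neg_one_le_cos (ψ l + φ)] : 0 ≤ 1 + Real.cos (ψ l + φ))]
  have hwpos : ∀ φ l, 0 < Real.sqrt (P l * lam φ l) :=
    fun φ l => Real.sqrt_pos.mpr (mul_pos (hP l) (hlp φ l))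
  have hzpos : ∀ φ l, 0 < z φ l := by
    intro φ l
    rw [hz]
    exact div_pos (by linarith [hwpos φ l]) ha0
  -- derivative of lam
  have hdlam : ∀ φ (l : Fin L), HasDerivAt (fun φ => lam φ l)
      (-(2 * A * α * β * Real.sin (ψ l + φ))) φ := by
    intro φ l
    have hfun : (fun φ => lam φ l)
        = fun φ => A * (α^2 + β^2 + 2 * α * β * Real.cos (ψ l + φ)) :=
      funext fun φ => hlam φ l
    rw [hfun]
    have hc : HasDerivAt (fun φ => Real.cos (ψ l + φ)) (-Real.sin (ψ l + φ)) φ := by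
      simpa using ((hasDerivAt_id φ).const_add (ψ l)).cos
    have := ((hc.const_mul (2 * α * β)).const_add (α^2 + β^2)).const_mul A
    refine this.congr_deriv ?_
    ring
  -- derivative of z
  have hdz : ∀ φ (l : Fin L), HasDerivAt (fun φ => z φ l)
      (P l * (-(2 * A * α * β * Real.sin (ψ l + φ))) / (a * Real.sqrt (P l * lam φ l))) φ := by
    intro φ l
    have hfun : (fun φ => z φ l) = fun φ => 2 * Real.sqrt (P l * lam φ l) / a :=
      funext fun φ => hz φ l
    rw [hfun]
    have h1 := ((hdlam φ l).const_mul (P l)).sqrt ((mul_pos (hP l) (hlp φ l)).ne')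
    have h2 := (h1.const_mul 2).div_const a
    refine h2.congr_deriv ?_
    have hw := hwpos φ l
    field_simp
  -- derivative of each term of ℒ
  have hT : ∀ φ (l : Fin L), HasDerivAt
      (fun φ => -(P l + lam φ l) / a + Real.log (besselI0 (z φ l)))
      (-(-(2 * A * α * β * Real.sin (ψ l + φ))) / a
        + besselR (z φ l) * (P l * (-(2 * A * α * β * Real.sin (ψ l + φ)))
            / (a * Real.sqrt (P l * lam φ l)))) φ := by
    intro φ l
    have h1 : HasDerivAt (fun φ => -(P l + lam φ l) / a)
        (-(-(2 * A * α * β * Real.sin (ψ l + φ))) / a) φ :=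
      (((hdlam φ l).const_add (P l)).neg).div_const a
    have h2 : HasDerivAt (fun φ => Real.log (besselI0 (z φ l)))
        (besselR (z φ l) * (P l * (-(2 * A * α * β * Real.sin (ψ l + φ)))
            / (a * Real.sqrt (P l * lam φ l)))) φ :=
      by have := (hasDerivAt_log_besselI0 (z φ l)).comp φ (hdz φ l); exact this
    exact h1.add h2
  -- first derivative of ℒ
  have hL1 : ∀ φ, HasDerivAt ℒ (∑ l : Fin L,
      (-(-(2 * A * α * β * Real.sin (ψ l + φ))) / a
        + besselR (z φ l) * (P l * (-(2 * A * α * β * Real.sin (ψ l + φ)))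
            / (a * Real.sqrt (P l * lam φ l))))) φ := by
    intro φ
    have hfun : ℒ = fun φ => (∑ l : Fin L, (-(P l + lam φ l) / a
        + Real.log (besselI0 (z φ l)))) - L * Real.log a := funext hℒ
    rw [hfun]
    exact (HasDerivAt.fun_sum fun l _ => hT φ l).sub_const _
  refine ⟨fun φ => (hL1 φ).differentiableAt, ?_⟩
  intro φ
  have hderiv : deriv ℒ = fun φ => ∑ l : Fin L,
      (-(-(2 * A * α * β * Real.sin (ψ l + φ))) / a
        + besselR (z φ l) * (P l * (-(2 * A * α * β * Real.sin (ψ l + φ)))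
            / (a * Real.sqrt (P l * lam φ l)))) := funext fun φ => (hL1 φ).deriv
  rw [hderiv]
  have hD2 : ∀ l : Fin L, HasDerivAt
      (fun φ => -(-(2 * A * α * β * Real.sin (ψ l + φ))) / a
        + besselR (z φ l) * (P l * (-(2 * A * α * β * Real.sin (ψ l + φ)))
            / (a * Real.sqrt (P l * lam φ l))))
      (2 * A * α * β * Real.cos (ψ l + φ) / a
        + ((1 - besselR (z φ l)^2 - besselR (z φ l) / z φ l)
              * (P l * (-(2 * A * α * β * Real.sin (ψ l + φ)))
                  / (a * Real.sqrt (P l * lam φ l)))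
              * (P l * (-(2 * A * α * β * Real.sin (ψ l + φ)))
                  / (a * Real.sqrt (P l * lam φ l)))
          + besselR (z φ l) *
            ((P l * (-(2 * A * α * β * Real.cos (ψ l + φ))) * (a * Real.sqrt (P l * lam φ l))
              - P l * (-(2 * A * α * β * Real.sin (ψ l + φ)))
                * (a * (P l * (-(2 * A * α * β * Real.sin (ψ l + φ)))
                    / (2 * Real.sqrt (P l * lam φ l)))))
              / (a * Real.sqrt (P l * lam φ l))^2))) φ := by
    intro l
    have hsin : HasDerivAt (fun φ => Real.sin (ψ l + φ)) (Real.cos (ψ l + φ)) φ := by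
      simpa using ((hasDerivAt_id φ).const_add (ψ l)).sin
    have h1 : HasDerivAt (fun φ => -(-(2 * A * α * β * Real.sin (ψ l + φ))) / a)
        (2 * A * α * β * Real.cos (ψ l + φ) / a) φ := by
      have := (((hsin.const_mul (2 * A * α * β)).neg).neg).div_const a
      refine this.congr_deriv ?_
      ring
    have h2 : HasDerivAt (fun φ => besselR (z φ l))
        ((1 - besselR (z φ l)^2 - besselR (z φ l) / z φ l)
          * (P l * (-(2 * A * α * β * Real.sin (ψ l + φ)))
              / (a * Real.sqrt (P l * lam φ l)))) φ :=
      by have := (hasDerivAt_besselR (hzpos φ l).ne').comp φ (hdz φ l); exact this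
    have hN : HasDerivAt (fun φ => P l * (-(2 * A * α * β * Real.sin (ψ l + φ))))
        (P l * (-(2 * A * α * β * Real.cos (ψ l + φ)))) φ :=
      ((hsin.const_mul (2 * A * α * β)).neg).const_mul (P l)
    have hW : HasDerivAt (fun φ => Real.sqrt (P l * lam φ l))
        (P l * (-(2 * A * α * β * Real.sin (ψ l + φ))) / (2 * Real.sqrt (P l * lam φ l))) φ :=
      ((hdlam φ l).const_mul (P l)).sqrt ((mul_pos (hP l) (hlp φ l)).ne')
    have hD : HasDerivAt (fun φ => a * Real.sqrt (P l * lam φ l))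
        (a * (P l * (-(2 * A * α * β * Real.sin (ψ l + φ)))
          / (2 * Real.sqrt (P l * lam φ l)))) φ := hW.const_mul a
    have h3 := hN.div hD (by
      exact (mul_pos ha0 (hwpos φ l)).ne')
    exact h1.add (h2.mul h3)
  have hsum := HasDerivAt.fun_sum (fun l (_ : l ∈ Finset.univ) => hD2 l)
  refine hsum.congr_deriv ?_
  rw [Finset.mul_sum, Finset.mul_sum, ← Finset.sum_add_distrib]
  refine Finset.sum_congr rfl fun l _ => ?_
  have hpl := hP l
  have hll := hlp φ l
  set r := besselR (z φ l) with hr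
  have hzz : z φ l = 2 * Real.sqrt (P l * lam φ l) / a := hz φ l
  have hw : Real.sqrt (P l * lam φ l) = Real.sqrt (P l) * Real.sqrt (lam φ l) :=
    Real.sqrt_mul hpl.le _
  have hq : Real.sqrt (P l / lam φ l) = Real.sqrt (P l) / Real.sqrt (lam φ l) :=
    Real.sqrt_div hpl.le _
  set sp := Real.sqrt (P l) with hspdef
  set sl := Real.sqrt (lam φ l) with hsldef
  have hsp2 : sp ^ 2 = P l := Real.sq_sqrt hpl.le
  have hsl2 : sl ^ 2 = lam φ l := Real.sq_sqrt hll.le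
  have hsp0 : 0 < sp := Real.sqrt_pos.mpr hpl
  have hsl0 : 0 < sl := Real.sqrt_pos.mpr hll
  rw [hzz, hw, hq, ← hsp2, ← hsl2, ha]
  have hA' : A ≠ 0 := hA.ne'
  have hσ : σv ≠ 0 := hσv.ne'
  field_simp
  ring
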